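/- Fix δ ≥ 0 and integers g. Suppose a Laurent series F(q) = q^{1-g} ∑_{i≥0} e_i q^i (with e_i ∈ ℤ, e_0 arbitrary) can be written as F(q) = ∑_{r=g-δ}^{g} n_r q^{1-r}(1-q)^{2r-2} with rational n_r. Then n_{g-δ} is an explicit ℤ-linear combination of e_0, e_1, …, e_δ with coefficients depending only on g and δ; in particular n_{g-δ} is determined by (is a function of) e_0, …, e_δ alone, independent of e_i for i > δ. -/

import Mathlib

/-!
Put `r = g - j`. The coefficient of `q^{1-g+i}` in `q^{1-r}(1-q)^{2r-2}` is the coefficient of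
`q^{i-j}` in `(1-q)^{2(g-j)-2}`: an integer (as `1 - q` is a unit of `ℤ⟦q⟧`), zero for `i < j`
and `1` for `i = j`. So `e_0, …, e_δ` are the image of `n_g, …, n_{g-δ}` under a lower
unitriangular integer matrix. It has determinant `1`, hence its adjugate is an integral inverse,
and the last row of the adjugate gives the coefficients expressing `n_{g-δ}`.
-/

open Finset

/-- The formal variable `q` in the field of Laurent series `ℚ((q))`. -/
noncomputable def q : LaurentSeries ℚ := HahnSeries.single (1 : ℤ) 1

open PowerSeries

open Matrix in
theorem RingHom.mapMatrix_adjugate_mulVec_mapMatrix_mulVec {n R S : Type*} [Fintype n]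
    [DecidableEq n] [CommRing R] [CommRing S] (f : R →+* S) {M : Matrix n n R}
    (hM : M.det = 1) (v : n → S) :
    f.mapMatrix M.adjugate *ᵥ (f.mapMatrix M *ᵥ v) = v := by
  rw [Matrix.mulVec_mulVec, ← map_mul, Matrix.adjugate_mul, hM, one_smul, map_one,
    Matrix.one_mulVec]

theorem sum_Icc_sub_eq_sum_fin {M : Type*} [AddCommMonoid M] (g : ℤ) (δ : ℕ) (f : ℤ → M) :
    ∑ r ∈ Icc (g - δ) g, f r = ∑ j : Fin (δ + 1), f (g - j) := by
  rw [Fin.sum_univ_eq_sum_range (fun j => f (g - j))]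
  refine sum_nbij' (fun r => (g - r).toNat) (fun j => g - j) ?_ ?_ ?_ ?_ fun r hr => ?_
  all_goals simp only [mem_Icc, mem_range] at *
  · intro r hr; omega
  · intro j hj; omega
  · intro r hr; omega
  · intro j hj; omega
  · rw [Int.toNat_of_nonneg (by omega), sub_sub_cancel]

theorem q_zpow (a : ℤ) : q ^ a = HahnSeries.single a 1 :=
  (RatFunc.single_zpow a).symm

theorem coeff_q_zpow_mul (a z : ℤ) (f : LaurentSeries ℚ) :
    (q ^ a * f).coeff z = f.coeff (z - a) := by
  rw [q_zpow, HahnSeries.coeff_single_mul, one_mul]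

noncomputable def oneSubX : ℤ⟦X⟧ˣ := (isUnit_iff_constantCoeff (φ := 1 - X).mpr (by simp)).unit

theorem constantCoeff_oneSubX_zpow (m : ℤ) :
    constantCoeff ((oneSubX ^ m : ℤ⟦X⟧ˣ) : ℤ⟦X⟧) = 1 := by
  have h : Units.map (constantCoeff : ℤ⟦X⟧ →+* ℤ).toMonoidHom oneSubX = 1 :=
    Units.ext (by simp [oneSubX])
  change ((Units.map _ (oneSubX ^ m) : ℤˣ) : ℤ) = 1
  rw [map_zpow, h, _root_.one_zpow, Units.val_one]

theorem map_units_val_zpow {M N F : Type*} [Monoid M] [DivisionMonoid N] [FunLike F M N]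
    [MonoidHomClass F M N] (f : F) (u : Mˣ) (m : ℤ) : f ↑(u ^ m) = f ↑u ^ m := by
  change ((Units.map (f : M →* N) (u ^ m) : Nˣ) : N) = _
  rw [map_zpow, Units.val_zpow_eq_zpow_val]
  rfl

theorem ofPowerSeries_map_oneSubX_zpow (m : ℤ) :
    HahnSeries.ofPowerSeries ℤ ℚ (map (Int.castRingHom ℚ) ((oneSubX ^ m : ℤ⟦X⟧ˣ) : ℤ⟦X⟧)) =
      (1 - q) ^ m := by
  have h : HahnSeries.ofPowerSeries ℤ ℚ (map (Int.castRingHom ℚ) (oneSubX : ℤ⟦X⟧)) = 1 - q := by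
    simp [oneSubX, q]
  rw [← RingHom.comp_apply, map_units_val_zpow, RingHom.comp_apply, h]

theorem coeff_one_sub_q_zpow (m z : ℤ) :
    ((1 - q) ^ m).coeff z =
      ((HahnSeries.ofPowerSeries ℤ ℤ ((oneSubX ^ m : ℤ⟦X⟧ˣ) : ℤ⟦X⟧)).coeff z : ℚ) := by
  rw [← ofPowerSeries_map_oneSubX_zpow, coeff_coe, coeff_coe]
  split_ifs <;> simp [coeff_map]

/-- The coefficient of `q^{1-g+i}` in `q^{1-r}(1-q)^{2r-2}` for `r = g - j`. -/
noncomputable def bpsMatrix (g : ℤ) (δ : ℕ) : Matrix (Fin (δ + 1)) (Fin (δ + 1)) ℤ :=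
  fun i j =>
    (HahnSeries.ofPowerSeries ℤ ℤ ((oneSubX ^ (2 * (g - j) - 2) : ℤ⟦X⟧ˣ) : ℤ⟦X⟧)).coeff (i - j)

theorem bpsMatrix_isLowerTriangular (g : ℤ) (δ : ℕ) : (bpsMatrix g δ).IsLowerTriangular := by
  intro i j hij
  rw [bpsMatrix, coeff_coe, if_pos (by simpa [sub_neg] using hij)]

theorem det_bpsMatrix (g : ℤ) (δ : ℕ) : (bpsMatrix g δ).det = 1 := by
  rw [Matrix.det_of_isLowerTriangular _ (bpsMatrix_isLowerTriangular g δ)]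
  refine Finset.prod_eq_one fun i _ => ?_
  rw [bpsMatrix, sub_self, coeff_coe, if_neg (lt_irrefl 0), Int.natAbs_zero,
    coeff_zero_eq_constantCoeff_apply, constantCoeff_oneSubX_zpow]

open Matrix in
theorem bpsMatrix_mulVec {g : ℤ} {δ : ℕ} {e : ℕ → ℤ} {n : ℤ → ℚ}
    (he : ∀ i : ℕ, (∑ r ∈ Icc (g - δ) g, n r • (q ^ (1 - r) * (1 - q) ^ (2 * r - 2))).coeff
      (1 - g + i) = (e i : ℚ)) :
    (Int.castRingHom ℚ).mapMatrix (bpsMatrix g δ) *ᵥ (fun j => n (g - j)) =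
      fun i : Fin (δ + 1) => (e i : ℚ) := by
  ext i
  rw [mulVec, dotProduct, ← he i, HahnSeries.coeff_sum, sum_Icc_sub_eq_sum_fin]
  refine Finset.sum_congr rfl fun j _ => ?_
  rw [HahnSeries.coeff_smul, coeff_q_zpow_mul, coeff_one_sub_q_zpow, smul_eq_mul, mul_comm]
  simp only [RingHom.mapMatrix_apply, Matrix.map_apply, bpsMatrix, eq_intCast]
  congr 3
  ring

/-- In an expansion `q^{1-g} ∑_{i≥0} e_i q^i = ∑_{r=g-δ}^{g} n_r q^{1-r}(1-q)^{2r-2}`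
the bottom coefficient `n_{g-δ}` is a `ℤ`-linear combination of `e_0, …, e_δ` with
coefficients depending only on `g` and `δ` — independent of the `e_i` for `i > δ`. -/
theorem bottom_BPS_linear (g : ℤ) (δ : ℕ) :
    ∃ c : ℕ → ℤ, ∀ (e : ℕ → ℤ) (n : ℤ → ℚ),
      (∀ i : ℕ,
        (∑ r ∈ Finset.Icc (g - δ) g,
            n r • (q ^ (1 - r) * (1 - q) ^ (2 * r - 2))).coeff (1 - g + i) = (e i : ℚ)) →
      n (g - δ) = ∑ i ∈ Finset.range (δ + 1), (c i : ℚ) * (e i : ℚ) := by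
  refine ⟨fun i => if h : i < δ + 1 then (bpsMatrix g δ).adjugate (Fin.last δ) ⟨i, h⟩ else 0,
    fun e n he => ?_⟩
  have hsolve := congrFun ((Int.castRingHom ℚ).mapMatrix_adjugate_mulVec_mapMatrix_mulVec
    (det_bpsMatrix g δ) fun j => n (g - j)) (Fin.last δ)
  rw [bpsMatrix_mulVec he] at hsolve
  rw [← Fin.sum_univ_eq_sum_range (fun i => _ * (e i : ℚ))]
  simpa [Matrix.mulVec, dotProduct, Fin.is_le] using hsolve.symm
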